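/- Fix y ∈ X. The function φ : (0,∞) → ℝ, α ↦ d²_{αC}(y) = α² d²_C(y/α), is convex, differentiable with φ'(α) = −2α⟨P_C(y/α), y/α − P_C(y/α)⟩ ≤ 0, hence decreasing and bounded below by 0; moreover lim_{α→0⁺} φ(α) = d²_{rec(C)}(y) and lim_{α→∞} φ(α) = d²_{clcone(C)}(y). -/

import Mathlib

/-
Rescaling gives `d_{αC}(y) = α d_C(y/α)`. As `C` is star-shaped about `0`, the sets `αC`
increase with `α`, so `φ` decreases; and `l • aC + m • bC = (la + mb) • C` makes
`α ↦ d_{αC}(y)` convex, hence so is its square. The squared distance `d_C²` is Fréchet differentiable with gradient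
`2 (x - P_C x)`: comparing `x` and `x'` with each other's projections bounds the remainder by
`‖x' - x‖²`, thanks to the monotonicity of `I - P_C`; the chain rule then gives `φ'`.
As `α → ∞` the sets `αC` increase to the cone generated by `C`. As `α → 0⁺` they decrease to
`⋂ αC = rec(C)`, and the projections `p_n` of `y` onto a decreasing sequence of closed convex
sets satisfy `‖p_m - p_n‖² ≤ d_m² - d_n²`, so they converge to a point of the intersection.
-/

open scoped Pointwise RealInnerProductSpace
open Metric Filter Set Topology

def IsMetricProjection {X : Type*} [PseudoMetricSpace X] (C : Set X) (P : X → X) : Prop :=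
  ∀ x, P x ∈ C ∧ ∀ c ∈ C, dist x (P x) ≤ dist x c

def recessionCone {X : Type*} [Add X] (C : Set X) : Set X :=
  {v | ∀ c ∈ C, v + c ∈ C}

theorem IsMetricProjection.infDist_eq {X : Type*} [PseudoMetricSpace X] {C : Set X} {P : X → X}
    (hP : IsMetricProjection C P) (x : X) : infDist x C = dist x (P x) :=
  le_antisymm (infDist_le_dist_of_mem (hP x).1) <| (le_infDist ⟨_, (hP x).1⟩).2 (hP x).2

theorem cauchySeq_of_dist_sq_le_sub {X : Type*} [PseudoMetricSpace X] {p : ℕ → X} {e : ℕ → ℝ}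
    (hbdd : BddAbove (range e)) (h : ∀ n m, n ≤ m → dist (p m) (p n) ^ 2 ≤ e m - e n) :
    CauchySeq p := by
  have he : Monotone e := monotone_nat_of_le_succ fun n =>
    sub_nonneg.1 ((sq_nonneg _).trans (h n (n + 1) n.le_succ))
  have hlim := tendsto_atTop_ciSup he hbdd
  refine Metric.cauchySeq_iff'.2 fun ε hε => ?_
  obtain ⟨N, hN⟩ := (hlim.eventually (lt_mem_nhds (sub_lt_self _ (pow_pos hε 2)))).exists
  refine ⟨N, fun n hn => lt_of_pow_lt_pow_left₀ 2 hε.le ?_⟩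
  linarith [h N n hn, he.ge_of_tendsto hlim n]

theorem infDist_eq_iInf_norm {X : Type*} [SeminormedAddCommGroup X] {C : Set X} (x : X) :
    infDist x C = ⨅ c : C, ‖x - c‖ := by
  simp only [infDist_eq_iInf, dist_eq_norm]

theorem infDist_smul_set {X : Type*} [SeminormedAddCommGroup X] [NormedSpace ℝ X] {α : ℝ}
    (hα : 0 < α) (s : Set X) (y : X) : infDist y (α • s) = α * infDist (α⁻¹ • y) s := by
  conv_lhs => rw [← smul_inv_smul₀ hα.ne' y]
  rw [infDist_smul₀ hα.ne', Real.norm_of_nonneg hα.le]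

section NormedSpace

variable {X : Type*} [SeminormedAddCommGroup X] [NormedSpace ℝ X] {C : Set X}

theorem StarConvex.smul_set_subset_of_le (hC : StarConvex ℝ 0 C) {a b : ℝ} (ha : 0 ≤ a)
    (hb : 0 < b) (hab : a ≤ b) : a • C ⊆ b • C := by
  rintro _ ⟨c, hc, rfl⟩
  refine ⟨(a / b) • c, hC.smul_mem hc (by positivity) (div_le_one_of_le₀ hab hb.le), ?_⟩
  simp only [smul_smul, mul_div_cancel₀ _ hb.ne']

theorem antitoneOn_infDist_smul_set (hC : StarConvex ℝ 0 C) (hne : C.Nonempty) (y : X) :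
    AntitoneOn (fun α : ℝ => infDist y (α • C)) (Ioi 0) := fun _ ha _ _ hab =>
  infDist_le_infDist_of_subset (hC.smul_set_subset_of_le (le_of_lt ha) (ha.trans_le hab) hab)
    hne.smul_set

theorem convexOn_infDist_smul_set (hC : Convex ℝ C) (hne : C.Nonempty) (y : X) :
    ConvexOn ℝ (Ici 0) (fun α : ℝ => infDist y (α • C)) := by
  refine ⟨convex_Ici 0, fun a ha b hb l m hl hm hlm => le_of_forall_pos_le_add fun ε hε => ?_⟩
  obtain ⟨u, hu, hyu⟩ := (infDist_lt_iff hne.smul_set).1 (lt_add_of_pos_right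
    (infDist y (a • C)) hε)
  obtain ⟨v, hv, hyv⟩ := (infDist_lt_iff hne.smul_set).1 (lt_add_of_pos_right
    (infDist y (b • C)) hε)
  have hmem : l • u + m • v ∈ (l • a + m • b) • C := by
    rw [smul_eq_mul, smul_eq_mul, hC.add_smul (mul_nonneg hl ha) (mul_nonneg hm hb), ← smul_smul,
      ← smul_smul]
    exact add_mem_add (smul_mem_smul_set hu) (smul_mem_smul_set hv)
  have hsplit : y - (l • u + m • v) = l • (y - u) + m • (y - v) := by
    calc y - (l • u + m • v) = (l + m) • y - (l • u + m • v) := by rw [hlm, one_smul]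
      _ = l • (y - u) + m • (y - v) := by rw [add_smul, smul_sub, smul_sub]; abel
  calc infDist y ((l • a + m • b) • C) ≤ dist y (l • u + m • v) := infDist_le_dist_of_mem hmem
    _ ≤ l * dist y u + m * dist y v := by
      rw [dist_eq_norm, dist_eq_norm, dist_eq_norm, hsplit]
      refine (norm_add_le _ _).trans_eq ?_
      rw [norm_smul, norm_smul, Real.norm_of_nonneg hl, Real.norm_of_nonneg hm]
    _ ≤ l * (infDist y (a • C) + ε) + m * (infDist y (b • C) + ε) := by gcongr
    _ = l • infDist y (a • C) + m • infDist y (b • C) + ε := by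
      simp only [smul_eq_mul]; linear_combination ε * hlm

theorem tendsto_infDist_smul_set_atTop (hC : StarConvex ℝ 0 C) (hne : C.Nonempty) (y : X) :
    Tendsto (fun α : ℝ => infDist y (α • C)) atTop
      (𝓝 (infDist y (closure (⋃ ρ ∈ Ioi (0 : ℝ), ρ • C)))) := by
  set U := ⋃ ρ ∈ Ioi (0 : ℝ), ρ • C
  have hsub : ∀ {α : ℝ}, 0 < α → α • C ⊆ U := fun hα => subset_biUnion_of_mem (u := (· • C)) hα
  have hUne : U.Nonempty := hne.smul_set.mono (hsub one_pos)
  rw [infDist_closure]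
  refine tendsto_order.2 ⟨fun r hr => ?_, fun r hr => ?_⟩
  · filter_upwards [eventually_gt_atTop 0] with α hα
    exact hr.trans_le (infDist_le_infDist_of_subset (hsub hα) hne.smul_set)
  · obtain ⟨z, hzU, hyz⟩ := (infDist_lt_iff hUne).1 hr
    obtain ⟨ρ, hρ, hzρ⟩ := mem_iUnion₂.1 hzU
    filter_upwards [eventually_ge_atTop ρ] with α hα
    exact (infDist_le_dist_of_mem (hC.smul_set_subset_of_le (le_of_lt hρ) (hρ.trans_le hα) hα
      hzρ)).trans_lt hyz

theorem recessionCone_subset_smul_set (hC : Convex ℝ C) (h0 : (0 : X) ∈ C) {α : ℝ}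
    (hα : 0 < α) : recessionCone C ⊆ α • C := by
  intro v hv
  have hnv : ∀ n : ℕ, (n : ℝ) • v ∈ C := by
    intro n
    induction n with
    | zero => simpa using h0
    | succ n ih => simpa [add_smul, add_comm] using hv _ ih
  obtain ⟨n, hn⟩ := exists_nat_ge α⁻¹
  have hnpos : (0 : ℝ) < n := (inv_pos.2 hα).trans_le hn
  have hmem := (hC.starConvex h0).smul_mem (hnv n) (t := α⁻¹ / n) (by positivity)
    (div_le_one_of_le₀ hn hnpos.le)
  rw [smul_smul, div_mul_cancel₀ _ hnpos.ne'] at hmem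
  exact (mem_smul_set_iff_inv_smul_mem₀ hα.ne' C v).2 hmem

theorem mem_recessionCone_of_forall_mem_smul_set (hcl : IsClosed C) (hC : Convex ℝ C) {x : X}
    (hx : ∀ α : ℝ, 0 < α → x ∈ α • C) : x ∈ recessionCone C := by
  intro c hc
  have hlim : Tendsto (fun s : ℝ => (1 - s) • c + x) (𝓝[>] 0) (𝓝 (x + c)) := by
    rw [add_comm x]
    refine Tendsto.add_const x (tendsto_nhdsWithin_of_tendsto_nhds ?_)
    simpa using ((continuous_const.sub continuous_id).smul continuous_const).tendsto (0 : ℝ)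
      (f := fun s : ℝ => (1 - s) • c)
  refine hcl.mem_of_tendsto hlim ?_
  filter_upwards [Ioo_mem_nhdsGT one_pos] with s hs
  have hxs := (mem_smul_set_iff_inv_smul_mem₀ hs.1.ne' C x).1 (hx s hs.1)
  simpa [smul_smul, hs.1.ne'] using
    hC hc hxs (sub_nonneg.2 hs.2.le) hs.1.le (sub_add_cancel 1 s)

theorem iInter_smul_set_eq_recessionCone (hcl : IsClosed C) (hC : Convex ℝ C) (h0 : (0 : X) ∈ C) :
    ⋂ n : ℕ, ((n : ℝ) + 1)⁻¹ • C = recessionCone C := by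
  refine subset_antisymm (fun x hx => mem_recessionCone_of_forall_mem_smul_set hcl hC
    fun α hα => ?_) (subset_iInter fun n => recessionCone_subset_smul_set hC h0 (by positivity))
  obtain ⟨n, hn⟩ := exists_nat_ge α⁻¹
  exact (hC.starConvex h0).smul_set_subset_of_le (by positivity) hα
    (inv_le_of_inv_le₀ hα (by linarith)) (mem_iInter.1 hx n)

end NormedSpace

section InnerProductSpace

variable {X : Type*} [NormedAddCommGroup X] [InnerProductSpace ℝ X] {C : Set X} {P : X → X}

namespace IsMetricProjection

theorem inner_le_zero (hP : IsMetricProjection C P) (hC : Convex ℝ C) (x : X) {c : X}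
    (hc : c ∈ C) : ⟪x - P x, c - P x⟫ ≤ 0 := by
  refine (norm_eq_iInf_iff_real_inner_le_zero hC (hP x).1).1 ?_ c hc
  rw [← infDist_eq_iInf_norm, hP.infDist_eq, dist_eq_norm]

theorem inner_sub_nonneg_of_zero_mem (hP : IsMetricProjection C P) (hC : Convex ℝ C) (h0 : (0 : X) ∈ C)
    (x : X) : 0 ≤ ⟪P x, x - P x⟫ := by
  have h := hP.inner_le_zero hC x h0
  rwa [zero_sub, inner_neg_right, neg_nonpos, real_inner_comm] at h

theorem inner_sub_sub_nonneg (hP : IsMetricProjection C P) (hC : Convex ℝ C) (x x' : X) :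
    0 ≤ ⟪(x' - P x') - (x - P x), x' - x⟫ := by
  have h₁ := hP.inner_le_zero hC x (hP x').1
  have h₂ := hP.inner_le_zero hC x' (hP x).1
  rw [← neg_sub (P x') (P x), inner_neg_right, neg_nonpos] at h₂
  have hsplit : x' - x = ((x' - P x') - (x - P x)) + (P x' - P x) := by abel
  rw [hsplit, inner_add_right, real_inner_self_eq_norm_sq, inner_sub_left]
  nlinarith [sq_nonneg ‖(x' - P x') - (x - P x)‖]

theorem abs_infDist_sq_sub_le (hP : IsMetricProjection C P) (hC : Convex ℝ C) (x x' : X) :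
    |infDist x' C ^ 2 - infDist x C ^ 2 - 2 * ⟪x - P x, x' - x⟫| ≤ ‖x' - x‖ ^ 2 := by
  simp only [hP.infDist_eq, dist_eq_norm]
  have hup : ‖x' - P x'‖ ^ 2 ≤ ‖x' - P x‖ ^ 2 := by
    have := (hP x').2 _ (hP x).1
    rw [dist_eq_norm, dist_eq_norm] at this
    gcongr
  have hlow : ‖x - P x‖ ^ 2 ≤ ‖x - P x'‖ ^ 2 := by
    have := (hP x).2 _ (hP x').1
    rw [dist_eq_norm, dist_eq_norm] at this
    gcongr
  have e₁ : x' - P x = (x - P x) + (x' - x) := by abel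
  have e₂ : x - P x' = (x' - P x') - (x' - x) := by abel
  rw [e₁, norm_add_sq_real] at hup
  rw [e₂, norm_sub_sq_real (x' - P x')] at hlow
  have hmono := hP.inner_sub_sub_nonneg hC x x'
  rw [inner_sub_left] at hmono
  rw [abs_le]
  constructor <;> linarith

theorem hasFDerivAt_infDist_sq (hP : IsMetricProjection C P) (hC : Convex ℝ C) (x : X) :
    HasFDerivAt (fun z => infDist z C ^ 2) ((2 : ℝ) • innerSL ℝ (x - P x)) x := by
  rw [hasFDerivAt_iff_isLittleO_nhds_zero]
  refine Asymptotics.IsBigO.trans_isLittleO ?_ (Asymptotics.isLittleO_norm_pow_id one_lt_two)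
  refine Asymptotics.IsBigO.of_bound 1 (Eventually.of_forall fun h => ?_)
  simpa only [smul_apply, innerSL_apply_apply, smul_eq_mul,
    add_sub_cancel_left, Real.norm_eq_abs, abs_of_nonneg (sq_nonneg ‖h‖), one_mul]
    using hP.abs_infDist_sq_sub_le hC x (x + h)

theorem hasDerivAt_infDist_smul_sq (hP : IsMetricProjection C P) (hC : Convex ℝ C) (y : X)
    {α : ℝ} (hα : 0 < α) :
    HasDerivAt (fun β : ℝ => infDist y (β • C) ^ 2)
      (-2 * α * ⟪P (α⁻¹ • y), α⁻¹ • y - P (α⁻¹ • y)⟫) α := by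
  obtain ⟨u, rfl⟩ : ∃ u, y = α • u := ⟨α⁻¹ • y, (smul_inv_smul₀ hα.ne' y).symm⟩
  rw [inv_smul_smul₀ hα.ne']
  have hinv : HasDerivAt (fun β : ℝ => β⁻¹ • α • u) ((-(α ^ 2)⁻¹) • α • u) α :=
    (hasDerivAt_inv hα.ne').smul_const _
  have hcomp := (hP.hasFDerivAt_infDist_sq hC u).comp_hasDerivAt_of_eq α hinv
    (inv_smul_smul₀ hα.ne' u).symm
  refine (((hasDerivAt_pow 2 α).mul hcomp).congr_of_eventuallyEq ?_).congr_deriv ?_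
  · filter_upwards [Ioi_mem_nhds hα] with β hβ
    show infDist (α • u) (β • C) ^ 2 = β ^ 2 * infDist (β⁻¹ • α • u) C ^ 2
    rw [infDist_smul_set hβ, mul_pow]
  · have hsq : ‖u - P u‖ ^ 2 = ⟪u - P u, u⟫ - ⟪u - P u, P u⟫ := by
      rw [← real_inner_self_eq_norm_sq, inner_sub_right]
    simp only [Function.comp_apply, smul_apply, innerSL_apply_apply, smul_eq_mul, hP.infDist_eq,
      dist_eq_norm, inv_smul_smul₀ hα.ne', real_inner_smul_right]
    rw [hsq, real_inner_comm (P u)]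
    field_simp
    ring

end IsMetricProjection

theorem exists_isMetricProjection [CompleteSpace X] (hcl : IsClosed C) (hC : Convex ℝ C)
    (hne : C.Nonempty) : ∃ P : X → X, IsMetricProjection C P := by
  choose P hPC hP using exists_norm_eq_iInf_of_complete_convex hne hcl.isComplete hC
  refine ⟨P, fun x => ⟨hPC x, fun c hc => ?_⟩⟩
  rw [dist_eq_norm, hP, ← infDist_eq_iInf_norm]
  exact infDist_le_dist_of_mem hc

theorem tendsto_infDist_iInter_of_antitone [CompleteSpace X] {K : ℕ → Set X} (hK : Antitone K)
    (hcl : ∀ n, IsClosed (K n)) (hconv : ∀ n, Convex ℝ (K n)) (hne : (⋂ n, K n).Nonempty)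
    (y : X) : Tendsto (fun n => infDist y (K n)) atTop (𝓝 (infDist y (⋂ n, K n))) := by
  have hKne : ∀ n, (K n).Nonempty := fun n => hne.mono (iInter_subset K n)
  choose P hP using fun n => exists_isMetricProjection (hcl n) (hconv n) (hKne n)
  set p := fun n => P n y
  have hd : ∀ n, infDist y (K n) = dist y (p n) := fun n => (hP n).infDist_eq y
  have hle : ∀ n, infDist y (K n) ≤ infDist y (⋂ n, K n) := fun n =>
    infDist_le_infDist_of_subset (iInter_subset K n) hne
  have hstep : ∀ n m, n ≤ m → dist (p m) (p n) ^ 2 ≤ infDist y (K m) ^ 2 - infDist y (K n) ^ 2 := by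
    intro n m hnm
    have hvi : ⟪y - p n, p m - p n⟫ ≤ 0 := (hP n).inner_le_zero (hconv n) y (hK hnm (hP m y).1)
    have hsplit : y - p m = (y - p n) - (p m - p n) := by abel
    rw [hd, hd, dist_eq_norm, dist_eq_norm, dist_eq_norm, hsplit, norm_sub_sq_real (y - p n)]
    linarith
  have hbdd : BddAbove (range fun n => infDist y (K n) ^ 2) :=
    ⟨_, forall_mem_range.2 fun n => pow_le_pow_left₀ infDist_nonneg (hle n) 2⟩
  obtain ⟨q, hq⟩ := cauchySeq_tendsto_of_complete (cauchySeq_of_dist_sq_le_sub hbdd hstep)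
  have hqK : q ∈ ⋂ n, K n := mem_iInter.2 fun n => (hcl n).mem_of_tendsto hq
    (eventually_atTop.2 ⟨n, fun m hm => hK hm (hP m y).1⟩)
  have hlim : Tendsto (fun n => infDist y (K n)) atTop (𝓝 (dist y q)) := by
    simpa only [hd] using tendsto_const_nhds.dist hq
  convert hlim using 2
  exact le_antisymm (infDist_le_dist_of_mem hqK) (le_of_tendsto' hlim hle)

theorem tendsto_infDist_smul_set_nhdsGT_zero [CompleteSpace X] (hcl : IsClosed C)
    (hC : Convex ℝ C) (h0 : (0 : X) ∈ C) (y : X) :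
    Tendsto (fun α : ℝ => infDist y (α • C)) (𝓝[>] 0) (𝓝 (infDist y (recessionCone C))) := by
  set a : ℕ → ℝ := fun n => ((n : ℝ) + 1)⁻¹
  have ha : ∀ n, 0 < a n := fun n => by positivity
  have hseq : Tendsto (fun n => infDist y (a n • C)) atTop (𝓝 (infDist y (recessionCone C))) := by
    rw [← iInter_smul_set_eq_recessionCone hcl hC h0]
    refine tendsto_infDist_iInter_of_antitone (fun n m hnm => ?_)
      (fun n => hcl.smul_of_ne_zero (ha n).ne') (fun n => hC.smul _)
      ⟨0, mem_iInter.2 fun n => zero_mem_smul_set h0⟩ y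
    exact (hC.starConvex h0).smul_set_subset_of_le (ha m).le (ha n)
      (inv_anti₀ (by positivity) (by simpa using hnm))
  have hrec : ∀ α : ℝ, 0 < α → infDist y (α • C) ≤ infDist y (recessionCone C) :=
    fun α hα => infDist_le_infDist_of_subset (recessionCone_subset_smul_set hC h0 hα)
      ⟨0, fun c hc => by rwa [zero_add]⟩
  refine tendsto_order.2 ⟨fun r hr => ?_, fun r hr => ?_⟩
  · obtain ⟨N, hN⟩ := ((tendsto_order.1 hseq).1 r hr).exists
    filter_upwards [Ioo_mem_nhdsGT (ha N)] with α hα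
    exact hN.trans_le (antitoneOn_infDist_smul_set (hC.starConvex h0) ⟨0, h0⟩ y hα.1 (ha N) hα.2.le)
  · filter_upwards [self_mem_nhdsWithin] with α hα
    exact (hrec α hα).trans_lt hr

end InnerProductSpace

theorem scaled_squared_distance_properties
    {X : Type*} [NormedAddCommGroup X] [InnerProductSpace ℝ X] [CompleteSpace X]
    (C : Set X) (hcl : IsClosed C) (hconv : Convex ℝ C) (h0 : (0 : X) ∈ C)
    (y : X) (P : X → X)
    (hP : ∀ x : X, P x ∈ C ∧ ∀ c ∈ C, dist x (P x) ≤ dist x c) :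
    (∀ α : ℝ, 0 < α →
        (infDist y (α • C)) ^ 2 = α ^ 2 * (infDist (α⁻¹ • y) C) ^ 2) ∧
      ConvexOn ℝ (Set.Ioi (0 : ℝ)) (fun α : ℝ => (infDist y (α • C)) ^ 2) ∧
      (∀ α : ℝ, 0 < α →
        HasDerivAt (fun α : ℝ => (infDist y (α • C)) ^ 2)
          (-2 * α * ⟪P (α⁻¹ • y), α⁻¹ • y - P (α⁻¹ • y)⟫) α ∧
        -2 * α * ⟪P (α⁻¹ • y), α⁻¹ • y - P (α⁻¹ • y)⟫ ≤ 0) ∧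
      AntitoneOn (fun α : ℝ => (infDist y (α • C)) ^ 2) (Set.Ioi (0 : ℝ)) ∧
      (∀ α : ℝ, 0 < α → 0 ≤ (infDist y (α • C)) ^ 2) ∧
      Tendsto (fun α : ℝ => (infDist y (α • C)) ^ 2) (nhdsWithin 0 (Set.Ioi 0))
        (nhds ((infDist y {v : X | ∀ c ∈ C, v + c ∈ C}) ^ 2)) ∧
      Tendsto (fun α : ℝ => (infDist y (α • C)) ^ 2) atTop
        (nhds ((infDist y (closure (⋃ ρ ∈ Set.Ioi (0 : ℝ), ρ • C))) ^ 2)) := by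
  have hP' : IsMetricProjection C P := hP
  have hstar : StarConvex ℝ 0 C := hconv.starConvex h0
  have hne : C.Nonempty := ⟨0, h0⟩
  refine ⟨fun α hα => by rw [infDist_smul_set hα, mul_pow], ?_, fun α hα => ⟨?_, ?_⟩, ?_,
    fun α _ => sq_nonneg _, (tendsto_infDist_smul_set_nhdsGT_zero hcl hconv h0 y).pow 2,
    (tendsto_infDist_smul_set_atTop hstar hne y).pow 2⟩
  · exact ((convexOn_infDist_smul_set hconv hne y).subset Ioi_subset_Ici_self
      (convex_Ioi 0)).pow (fun _ _ => infDist_nonneg) 2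
  · exact hP'.hasDerivAt_infDist_smul_sq hconv y hα
  · nlinarith [hP'.inner_sub_nonneg_of_zero_mem hconv h0 (α⁻¹ • y)]
  · exact fun a ha b hb hab =>
      pow_le_pow_left₀ infDist_nonneg (antitoneOn_infDist_smul_set hstar hne y ha hb hab) 2
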